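/- Assume the set D of primitive Matchings is infinite, and let w₁, w₂, w₃, … be an enumeration of D with nondecreasing lengths. For each N ≥ 1 let F_N be the attractor of the finite IFS {φ_{w₁},…,φ_{w_N}}. Then F₁ ⊆ F₂ ⊆ F₃ ⊆ ⋯ and closure( ⋃_{N=1}^{∞} F_N ) = K₁+K₂. -/

import Mathlib

open Finset Pointwise

/-- The block `(0,…,0, β^k * a)` of length `k` associated to the similitude
`x ↦ x/β^k + a`. -/
noncomputable def digitBlock (β : ℝ) (k : ℕ) (a : ℝ) : List ℝ :=
  List.replicate (k - 1) 0 ++ [β ^ k * a]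

/-- `w` is a Matching generated by the digital sets `P` and `Q`: it is the coordinatewise
sum of a concatenation of blocks from `P` and a concatenation of blocks from `Q`
having the same total length as `w`. -/
def IsMatching {n m : ℕ} (P : Fin n → List ℝ) (Q : Fin m → List ℝ) (w : List ℝ) : Prop :=
  ∃ (is : List (Fin n)) (js : List (Fin m)),
    is ≠ [] ∧ js ≠ [] ∧
    (is.map P).flatten.length = w.length ∧
    (js.map Q).flatten.length = w.length ∧
    w = List.zipWith (· + ·) (is.map P).flatten (js.map Q).flatten

/-- A Matching is primitive if it is not a concatenation of two or more shorter Matchings. -/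
def IsPrimMatching {n m : ℕ} (P : Fin n → List ℝ) (Q : Fin m → List ℝ) (w : List ℝ) : Prop :=
  IsMatching P Q w ∧
    ¬ ∃ u v : List ℝ, u ≠ [] ∧ v ≠ [] ∧ IsMatching P Q u ∧ IsMatching P Q v ∧ w = u ++ v

/-- The value `Σ_{i=1}^{L} c_i β^{-i}` of the block `w = (c_1,…,c_L)` in base `β`. -/
noncomputable def blockVal (β : ℝ) (w : List ℝ) : ℝ :=
  ∑ i : Fin w.length, w.get i / β ^ (i.1 + 1)

/-- The similitude `φ_w(x) = x/β^{|w|} + Σ_i c_i β^{-i}` associated to a block `w`. -/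
noncomputable def phiBlock (β : ℝ) (w : List ℝ) (x : ℝ) : ℝ :=
  x / β ^ w.length + blockVal β w

/-- `x : ℕ → ℝ` (indexed from 0, representing `(x_k)_{k ≥ 1}`) is the infinite
concatenation of the nonempty blocks `W 0, W 1, …`. -/
def IsConcatSeq (W : ℕ → List ℝ) (x : ℕ → ℝ) : Prop :=
  (∀ t, W t ≠ []) ∧
    ∀ (t : ℕ) (i : Fin (W t).length),
      x ((∑ s ∈ Finset.range t, (W s).length) + i) = (W t).get i

/-- `x` is an infinite concatenation of blocks from the family `Ws`. -/
def IsInfConcatFrom (Ws : Set (List ℝ)) (x : ℕ → ℝ) : Prop :=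
  ∃ W : ℕ → List ℝ, (∀ t, W t ∈ Ws) ∧ IsConcatSeq W x

/-- The value `Σ_{k=1}^{∞} x_k β^{-k}` of a sequence (indexed from 0). -/
noncomputable def seqVal (β : ℝ) (x : ℕ → ℝ) : ℝ :=
  ∑' k : ℕ, x k / β ^ (k + 1)

/-- The set `E` of values of infinite concatenations of Matchings. -/
def Eset {n m : ℕ} (β : ℝ) (P : Fin n → List ℝ) (Q : Fin m → List ℝ) : Set ℝ :=
  {z | ∃ x : ℕ → ℝ, IsInfConcatFrom {w | IsMatching P Q w} x ∧ z = seqVal β x}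

/-- `a` is a coding: the coordinatewise sum of an infinite concatenation of blocks from
`P` and an infinite concatenation of blocks from `Q`. -/
def IsCoding {n m : ℕ} (P : Fin n → List ℝ) (Q : Fin m → List ℝ) (a : ℕ → ℝ) : Prop :=
  ∃ x y : ℕ → ℝ, IsInfConcatFrom (Set.range P) x ∧ IsInfConcatFrom (Set.range Q) y ∧
    ∀ k, a k = x k + y k

/-- The set `C` of codings having a tail containing no segment that is a Matching. -/
def Cset {n m : ℕ} (P : Fin n → List ℝ) (Q : Fin m → List ℝ) : Set (ℕ → ℝ) :=
  {a | IsCoding P Q a ∧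
    ∃ N : ℕ, ∀ j ≥ N, ∀ l : ℕ, 1 ≤ l →
      ¬ IsMatching P Q (List.ofFn fun i : Fin l => a (j + i))}


/-! The similitude of a Matching preserves `K₁ + K₂`, because
`φ_{zipWith (+) u v} (x + y) = φ_u x + φ_v y`; and an attractor of contracting block maps lies in
every nonempty closed set invariant under those maps. Hence each `F N` lies in `K₁ + K₂`, and
`F N ⊆ F M` for `N ≤ M`. Conversely, expanding `x ∈ K₁` and `y ∈ K₂` to depth `t` and padding the
two digit words to a common length gives a Matching `u` such that `φ_u (K₁ + K₂)` lies within
`O(β⁻ᵗ)` of `x + y`. The Matching `u` factors into primitive Matchings, all among `w 0, …, w N`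
for some `N`, so `φ_u (F N) ⊆ F N` and `x + y` is a limit of points of `⋃ N, F N`. -/

section Blocks

variable {β : ℝ}

lemma blockVal_nil : blockVal β [] = 0 := by
  simp [blockVal]

lemma blockVal_cons (c : ℝ) (u : List ℝ) :
    blockVal β (c :: u) = (c + blockVal β u) / β := by
  simp only [blockVal, List.length_cons, Fin.sum_univ_succ, List.get_eq_getElem, Fin.val_zero,
    Fin.val_succ, List.getElem_cons_zero, List.getElem_cons_succ, pow_succ, ← div_div,
    ← Finset.sum_div, pow_zero, add_div, div_one]

lemma phiBlock_nil (x : ℝ) : phiBlock β [] x = x := by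
  simp [phiBlock, blockVal_nil]

lemma phiBlock_cons (c : ℝ) (u : List ℝ) (x : ℝ) :
    phiBlock β (c :: u) x = (c + phiBlock β u x) / β := by
  simp only [phiBlock, blockVal_cons, List.length_cons, pow_succ, ← div_div]
  ring

lemma phiBlock_append (u v : List ℝ) (x : ℝ) :
    phiBlock β (u ++ v) x = phiBlock β u (phiBlock β v x) := by
  induction u with
  | nil => simp [phiBlock_nil]
  | cons c u ih => simp only [List.cons_append, phiBlock_cons, ih]

lemma phiBlock_zipWith_add :
    ∀ {u v : List ℝ}, u.length = v.length → ∀ x y : ℝ,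
      phiBlock β (List.zipWith (· + ·) u v) (x + y) = phiBlock β u x + phiBlock β v y
  | [], [], _, x, y => by simp [phiBlock_nil]
  | c :: u, d :: v, h, x, y => by
    simp only [List.zipWith_cons_cons, phiBlock_cons,
      phiBlock_zipWith_add (by simpa using h) x y]
    ring

lemma phiBlock_replicate_zero (k : ℕ) (x : ℝ) :
    phiBlock β (List.replicate k 0) x = x / β ^ k := by
  simp [phiBlock, blockVal, List.getElem_replicate]

lemma phiBlock_digitBlock (hβ : β ≠ 0) {k : ℕ} (hk : 0 < k) (c : ℝ) :
    phiBlock β (digitBlock β k c) = fun x => x / β ^ k + c := by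
  obtain ⟨k, rfl⟩ := Nat.exists_eq_add_of_lt hk
  funext x
  simp only [digitBlock, zero_add, Nat.add_sub_cancel, phiBlock_append, phiBlock_replicate_zero,
    phiBlock_cons, phiBlock_nil]
  field_simp
  ring

lemma digitBlock_ne_nil (k : ℕ) (c : ℝ) : digitBlock β k c ≠ [] := by
  simp [digitBlock]

lemma abs_phiBlock_sub_le (hβ : 1 ≤ β) {u : List ℝ} {t : ℕ} (ht : t ≤ u.length) {x y C : ℝ}
    (hxy : |x - y| ≤ C) : |phiBlock β u x - phiBlock β u y| ≤ C / β ^ t := by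
  have hβt : 0 < β ^ t := pow_pos (by linarith) t
  have hxy' : |x - y| / β ^ u.length ≤ |x - y| / β ^ t :=
    div_le_div_of_nonneg_left (abs_nonneg _) hβt (pow_le_pow_right₀ hβ ht)
  rw [show phiBlock β u x - phiBlock β u y = (x - y) / β ^ u.length by simp only [phiBlock]; ring,
    abs_div, abs_of_pos (pow_pos (by linarith : (0 : ℝ) < β) _)]
  exact hxy'.trans (div_le_div_of_nonneg_right hxy hβt.le)

end Blocks

section Attractor

variable {β : ℝ} {ι : Type*} {T : ι → List ℝ}

lemma mapsTo_phiBlock_flatten {S : Set ℝ} :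
    ∀ {l : List (List ℝ)}, (∀ v ∈ l, Set.MapsTo (phiBlock β v) S S) →
      Set.MapsTo (phiBlock β l.flatten) S S
  | [], _ => fun x hx => by simpa [phiBlock_nil] using hx
  | v :: l, h => by
    rw [List.flatten_cons, funext (phiBlock_append v l.flatten)]
    exact (h v List.mem_cons_self).comp
      (mapsTo_phiBlock_flatten fun v' hv' => h v' (List.mem_cons_of_mem v hv'))

lemma mapsTo_phiBlock_flatten_map {S : Set ℝ} (hS : ∀ i, Set.MapsTo (phiBlock β (T i)) S S)
    (is : List ι) : Set.MapsTo (phiBlock β (is.map T).flatten) S S :=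
  mapsTo_phiBlock_flatten (by simpa using fun i _ => hS i)

lemma mapsTo_phiBlock_of_eq_iUnion {K : Set ℝ} (hK : K = ⋃ i, phiBlock β (T i) '' K) (i : ι) :
    Set.MapsTo (phiBlock β (T i)) K K := fun x hx => by
  rw [hK]
  exact Set.mem_iUnion_of_mem i (Set.mem_image_of_mem _ hx)

lemma exists_mem_image_phiBlock_flatten (hT : ∀ i, T i ≠ []) {K : Set ℝ}
    (hK : K = ⋃ i, phiBlock β (T i) '' K) (t : ℕ) :
    ∀ x ∈ K, ∃ is : List ι, t ≤ (is.map T).flatten.length ∧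
      x ∈ phiBlock β (is.map T).flatten '' K := by
  induction t with
  | zero => exact fun x hx => ⟨[], le_rfl, x, hx, phiBlock_nil x⟩
  | succ t ih =>
    intro x hx
    rw [hK] at hx
    obtain ⟨i, x₁, hx₁, rfl⟩ := Set.mem_iUnion.mp hx
    obtain ⟨is, hlen, x₂, hx₂, rfl⟩ := ih x₁ hx₁
    refine ⟨i :: is, ?_, x₂, hx₂, by simp [phiBlock_append]⟩
    have := List.length_pos_iff.mpr (hT i)
    simp only [List.map_cons, List.flatten_cons, List.length_append]
    omega

lemma mem_closure_of_forall_abs_sub_le (hβ : 1 < β) {S : Set ℝ} {z : ℝ} (C : ℝ)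
    (h : ∀ t : ℕ, ∃ p ∈ S, |z - p| ≤ C / β ^ t) : z ∈ closure S := by
  have hlim : Filter.Tendsto (fun t : ℕ => C / β ^ t) Filter.atTop (nhds 0) :=
    tendsto_const_nhds.div_atTop (tendsto_pow_atTop_atTop_of_one_lt hβ)
  refine Metric.mem_closure_iff.mpr fun ε hε => ?_
  obtain ⟨t, ht⟩ := (hlim.eventually (gt_mem_nhds hε)).exists
  obtain ⟨p, hp, hzp⟩ := h t
  exact ⟨p, hp, (Real.dist_eq z p).trans_le hzp |>.trans_lt ht⟩

lemma subset_of_mapsTo_phiBlock (hβ : 1 < β) (hT : ∀ i, T i ≠ []) {A S : Set ℝ}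
    (hAb : Bornology.IsBounded A) (hA : A = ⋃ i, phiBlock β (T i) '' A)
    (hSne : S.Nonempty) (hSc : IsClosed S) (hS : ∀ i, Set.MapsTo (phiBlock β (T i)) S S) :
    A ⊆ S := by
  obtain ⟨s, hs⟩ := hSne
  intro z hz
  rw [← hSc.closure_eq]
  refine mem_closure_of_forall_abs_sub_le hβ (Metric.diam (insert s A)) fun t => ?_
  obtain ⟨is, hlen, z', hz', rfl⟩ := exists_mem_image_phiBlock_flatten hT hA t z hz
  refine ⟨_, mapsTo_phiBlock_flatten_map hS is hs, abs_phiBlock_sub_le hβ.le hlen ?_⟩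
  rw [← Real.dist_eq]
  exact Metric.dist_le_diam_of_mem (hAb.insert s) (Set.mem_insert_of_mem s hz')
    (Set.mem_insert s A)

end Attractor

lemma exists_append_sum_map_eq {ι κ : Type*} [Nonempty ι] [Nonempty κ] {f : ι → ℕ} {g : κ → ℕ}
    (hf : ∀ i, 0 < f i) (hg : ∀ j, 0 < g j) (is : List ι) (js : List κ) :
    ∃ (I : List ι) (J : List κ), I ≠ [] ∧ J ≠ [] ∧
      ((is ++ I).map f).sum = ((js ++ J).map g).sum := by
  obtain ⟨i⟩ := ‹Nonempty ι›
  obtain ⟨j⟩ := ‹Nonempty κ›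
  obtain ⟨A, hA⟩ := Nat.exists_eq_add_of_lt (hg j)
  obtain ⟨B, hB⟩ := Nat.exists_eq_add_of_lt (hf i)
  -- Both padded words then have weight `g j * Σ f is + f i * Σ g js + f i * g j`.
  refine ⟨(List.replicate A is).flatten ++ List.replicate ((js.map g).sum + g j) i,
    (List.replicate B js).flatten ++ List.replicate ((is.map f).sum + f i) j,
    by simp [(hg j).ne'], by simp [(hf i).ne'], ?_⟩
  simp only [List.map_append, List.sum_append, List.map_flatten, List.map_replicate,
    List.sum_flatten, List.sum_replicate, smul_eq_mul]
  rw [hA, hB]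
  ring

lemma exists_eq_flatten_of_not_split {α : Type*} (p : List α → Prop) :
    ∀ u, p u → ∃ l : List (List α), (∀ v ∈ l, p v ∧
      ¬ ∃ v₁ v₂ : List α, v₁ ≠ [] ∧ v₂ ≠ [] ∧ p v₁ ∧ p v₂ ∧ v = v₁ ++ v₂) ∧ u = l.flatten := by
  intro u hu
  induction h : u.length using Nat.strong_induction_on generalizing u with
  | _ k ih =>
    by_cases hsplit : ∃ v₁ v₂ : List α, v₁ ≠ [] ∧ v₂ ≠ [] ∧ p v₁ ∧ p v₂ ∧ u = v₁ ++ v₂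
    · obtain ⟨v₁, v₂, h₁, h₂, hp₁, hp₂, rfl⟩ := hsplit
      have := List.length_pos_iff.mpr h₁
      have := List.length_pos_iff.mpr h₂
      simp only [List.length_append] at h
      obtain ⟨l₁, hl₁, rfl⟩ := ih v₁.length (by omega) v₁ hp₁ rfl
      obtain ⟨l₂, hl₂, rfl⟩ := ih v₂.length (by omega) v₂ hp₂ rfl
      exact ⟨l₁ ++ l₂, fun v hv => (List.mem_append.mp hv).elim (hl₁ v) (hl₂ v),
        List.flatten_append.symm⟩
    · exact ⟨[u], fun v hv => List.mem_singleton.mp hv ▸ ⟨hu, hsplit⟩, by simp⟩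

lemma exists_bound_of_forall_mem_range {α : Type*} {w : ℕ → α} :
    ∀ {l : List α}, (∀ v ∈ l, v ∈ Set.range w) → ∃ N, ∀ v ∈ l, ∃ i ≤ N, w i = v
  | [], _ => ⟨0, by simp⟩
  | v :: l, h => by
    obtain ⟨i, rfl⟩ := h v List.mem_cons_self
    obtain ⟨N, hN⟩ := exists_bound_of_forall_mem_range fun v hv => h v (List.mem_cons_of_mem _ hv)
    refine ⟨max i N, fun v hv => ?_⟩
    rcases List.mem_cons.mp hv with rfl | hv
    · exact ⟨i, le_max_left i N, rfl⟩
    · obtain ⟨k, hk, rfl⟩ := hN v hv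
      exact ⟨k, hk.trans (le_max_right i N), rfl⟩

section Matching

variable {β : ℝ} {n m : ℕ} {P : Fin n → List ℝ} {Q : Fin m → List ℝ} {u : List ℝ}

lemma IsMatching.ne_nil (hP : ∀ i, P i ≠ []) (hu : IsMatching P Q u) : u ≠ [] := by
  obtain ⟨_ | ⟨i, is⟩, js, his, -, hlen, -, -⟩ := hu
  · exact absurd rfl his
  · rw [← List.length_pos_iff, ← hlen]
    simpa using Or.inl (List.length_pos_iff.mpr (hP i))

lemma IsMatching.mapsTo_add {K₁ K₂ : Set ℝ} (hK₁ : ∀ i, Set.MapsTo (phiBlock β (P i)) K₁ K₁)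
    (hK₂ : ∀ j, Set.MapsTo (phiBlock β (Q j)) K₂ K₂) (hu : IsMatching P Q u) :
    Set.MapsTo (phiBlock β u) (K₁ + K₂) (K₁ + K₂) := by
  obtain ⟨is, js, -, -, hlen₁, hlen₂, rfl⟩ := hu
  rintro _ ⟨x, hx, y, hy, rfl⟩
  rw [phiBlock_zipWith_add (hlen₁.trans hlen₂.symm)]
  exact Set.add_mem_add (mapsTo_phiBlock_flatten_map hK₁ is hx)
    (mapsTo_phiBlock_flatten_map hK₂ js hy)

lemma IsMatching.exists_eq_flatten (hu : IsMatching P Q u) :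
    ∃ l : List (List ℝ), (∀ v ∈ l, IsPrimMatching P Q v) ∧ u = l.flatten :=
  exists_eq_flatten_of_not_split _ u hu

variable [Nonempty (Fin n)] [Nonempty (Fin m)] {K₁ K₂ : Set ℝ}

lemma exists_isMatching_abs_sub_le (hβ : 1 < β) (hP : ∀ i, P i ≠ []) (hQ : ∀ j, Q j ≠ [])
    (hK₁b : Bornology.IsBounded K₁) (hK₂b : Bornology.IsBounded K₂)
    (hK₁ : K₁ = ⋃ i, phiBlock β (P i) '' K₁) (hK₂ : K₂ = ⋃ j, phiBlock β (Q j) '' K₂)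
    {z : ℝ} (hz : z ∈ K₁ + K₂) (t : ℕ) :
    ∃ u, IsMatching P Q u ∧
      ∀ s ∈ K₁ + K₂, |z - phiBlock β u s| ≤ (Metric.diam K₁ + Metric.diam K₂) / β ^ t := by
  obtain ⟨_, hxK, _, hyK, rfl⟩ := hz
  dsimp only
  obtain ⟨is, hist, x, hx, rfl⟩ := exists_mem_image_phiBlock_flatten hP hK₁ t _ hxK
  obtain ⟨js, hjst, y, hy, rfl⟩ := exists_mem_image_phiBlock_flatten hQ hK₂ t _ hyK
  obtain ⟨I, J, hI, hJ, hsum⟩ := exists_append_sum_map_eq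
    (fun i => List.length_pos_iff.mpr (hP i)) (fun j => List.length_pos_iff.mpr (hQ j)) is js
  have hlen : ((is ++ I).map P).flatten.length = ((js ++ J).map Q).flatten.length := by
    rw [List.length_flatten, List.length_flatten, List.map_map, List.map_map]
    exact hsum
  have hlen_zip : (List.zipWith (· + ·) ((is ++ I).map P).flatten
      ((js ++ J).map Q).flatten).length = ((is ++ I).map P).flatten.length := by
    rw [List.length_zipWith, hlen, min_self]
  refine ⟨_, ⟨is ++ I, js ++ J, by simp [hI], by simp [hJ], hlen_zip.symm,
    hlen ▸ hlen_zip.symm, rfl⟩, ?_⟩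
  rintro _ ⟨s₁, hs₁, s₂, hs₂, rfl⟩
  rw [phiBlock_zipWith_add hlen]
  simp only [List.map_append, List.flatten_append, phiBlock_append]
  have h₁ := abs_phiBlock_sub_le hβ.le hist <| (Real.dist_eq _ _).symm.trans_le <|
    Metric.dist_le_diam_of_mem hK₁b hx
      (mapsTo_phiBlock_flatten_map (mapsTo_phiBlock_of_eq_iUnion hK₁) I hs₁)
  have h₂ := abs_phiBlock_sub_le hβ.le hjst <| (Real.dist_eq _ _).symm.trans_le <|
    Metric.dist_le_diam_of_mem hK₂b hy
      (mapsTo_phiBlock_flatten_map (mapsTo_phiBlock_of_eq_iUnion hK₂) J hs₂)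
  rw [add_div, add_sub_add_comm]
  exact (abs_add_le _ _).trans (add_le_add h₁ h₂)

lemma subset_closure_iUnion_of_isPrimMatching (hβ : 1 < β) (hP : ∀ i, P i ≠ [])
    (hQ : ∀ j, Q j ≠ []) (hK₁b : Bornology.IsBounded K₁) (hK₂b : Bornology.IsBounded K₂)
    (hK₁ : K₁ = ⋃ i, phiBlock β (P i) '' K₁) (hK₂ : K₂ = ⋃ j, phiBlock β (Q j) '' K₂)
    {w : ℕ → List ℝ} (hw : ∀ v, IsPrimMatching P Q v → v ∈ Set.range w) {F : ℕ → Set ℝ}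
    (hFne : ∀ N, (F N).Nonempty) (hFsub : ∀ N, F N ⊆ K₁ + K₂)
    (hF : ∀ N i, i ≤ N → Set.MapsTo (phiBlock β (w i)) (F N) (F N)) :
    K₁ + K₂ ⊆ closure (⋃ N, F N) := by
  intro z hz
  refine mem_closure_of_forall_abs_sub_le hβ (Metric.diam K₁ + Metric.diam K₂) fun t => ?_
  obtain ⟨u, hu, hzu⟩ := exists_isMatching_abs_sub_le hβ hP hQ hK₁b hK₂b hK₁ hK₂ hz t
  obtain ⟨l, hl, rfl⟩ := hu.exists_eq_flatten
  obtain ⟨N, hN⟩ := exists_bound_of_forall_mem_range fun v hv => hw v (hl v hv)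
  have hFN : Set.MapsTo (phiBlock β l.flatten) (F N) (F N) := mapsTo_phiBlock_flatten fun v hv => by
    obtain ⟨i, hi, rfl⟩ := hN v hv
    exact hF N i hi
  obtain ⟨s, hs⟩ := hFne N
  exact ⟨_, Set.mem_iUnion_of_mem N (hFN hs), hzu s (hFsub N hs)⟩

end Matching

theorem statement14_general (β : ℝ) (hβ : 1 < β) (n m : ℕ) (hn : 0 < n) (hm : 0 < m)
    (nv : Fin n → ℕ) (hnv : ∀ i, 0 < nv i) (a : Fin n → ℝ)
    (mv : Fin m → ℕ) (hmv : ∀ j, 0 < mv j) (b : Fin m → ℝ)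
    (K₁ K₂ : Set ℝ)
    (hK₁ne : K₁.Nonempty) (hK₁c : IsCompact K₁)
    (hK₁ : K₁ = ⋃ i : Fin n, (fun x => x / β ^ nv i + a i) '' K₁)
    (hK₂ne : K₂.Nonempty) (hK₂c : IsCompact K₂)
    (hK₂ : K₂ = ⋃ j : Fin m, (fun x => x / β ^ mv j + b j) '' K₂)
    (P : Fin n → List ℝ) (Q : Fin m → List ℝ)
    (hP : P = fun i => digitBlock β (nv i) (a i))
    (hQ : Q = fun j => digitBlock β (mv j) (b j))
    (w : ℕ → List ℝ)
    (hwrange : Set.range w = {w : List ℝ | IsPrimMatching P Q w})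
    (F : ℕ → Set ℝ) (hFne : ∀ N, (F N).Nonempty) (hFc : ∀ N, IsCompact (F N))
    (hF : ∀ N, F N = ⋃ i : Fin (N + 1), phiBlock β (w i) '' F N) :
    Monotone F ∧ closure (⋃ N, F N) = K₁ + K₂ := by
  have hβ0 : β ≠ 0 := (zero_lt_one.trans hβ).ne'
  have := Fin.pos_iff_nonempty.mp hn
  have := Fin.pos_iff_nonempty.mp hm
  have hPne : ∀ i, P i ≠ [] := fun i => hP ▸ digitBlock_ne_nil _ _
  have hQne : ∀ j, Q j ≠ [] := fun j => hQ ▸ digitBlock_ne_nil _ _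
  have hK₁' : K₁ = ⋃ i, phiBlock β (P i) '' K₁ := by
    simpa only [hP, phiBlock_digitBlock hβ0 (hnv _)] using hK₁
  have hK₂' : K₂ = ⋃ j, phiBlock β (Q j) '' K₂ := by
    simpa only [hQ, phiBlock_digitBlock hβ0 (hmv _)] using hK₂
  have hw : ∀ N, IsPrimMatching P Q (w N) := fun N => hwrange.subset (Set.mem_range_self N)
  have hwne : ∀ N, w N ≠ [] := fun N => (hw N).1.ne_nil hPne
  have hFinv : ∀ N i, i ≤ N → Set.MapsTo (phiBlock β (w i)) (F N) (F N) :=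
    fun N i hi => mapsTo_phiBlock_of_eq_iUnion (hF N) ⟨i, Nat.lt_succ_of_le hi⟩
  have hFmin : ∀ N {S : Set ℝ}, S.Nonempty → IsClosed S →
      (∀ i ≤ N, Set.MapsTo (phiBlock β (w i)) S S) → F N ⊆ S := fun N _ hSne hSc hS =>
    subset_of_mapsTo_phiBlock (T := fun i : Fin (N + 1) => w i) hβ (fun i => hwne i)
      (hFc N).isBounded (hF N) hSne hSc fun i => hS i i.is_le
  have hFsub : ∀ N, F N ⊆ K₁ + K₂ := fun N =>
    hFmin N (hK₁ne.add hK₂ne) (hK₁c.add hK₂c).isClosed fun i _ => (hw i).1.mapsTo_add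
      (mapsTo_phiBlock_of_eq_iUnion hK₁') (mapsTo_phiBlock_of_eq_iUnion hK₂')
  refine ⟨fun N M hNM => hFmin N (hFne M) (hFc M).isClosed fun i hi => hFinv M i (hi.trans hNM),
    ?_⟩
  exact (closure_minimal (Set.iUnion_subset hFsub) (hK₁c.add hK₂c).isClosed).antisymm
    (subset_closure_iUnion_of_isPrimMatching hβ hPne hQne hK₁c.isBounded hK₂c.isBounded
      hK₁' hK₂' (fun v hv => hwrange.superset hv) hFne hFsub hFinv)

/-- if the set `D` of primitive Matchings is infinite and `w 0, w 1, …` is an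
enumeration of `D` with nondecreasing lengths, and `F N` is the attractor of the finite IFS
of the first `N+1` similitudes, then `(F N)` is increasing and `closure(⋃ N, F N) = K₁+K₂`. -/
theorem statement14 (β : ℝ) (hβ : 1 < β) (n m : ℕ) (hn : 0 < n) (hm : 0 < m)
    (nv : Fin n → ℕ) (hnv : ∀ i, 0 < nv i) (a : Fin n → ℝ)
    (mv : Fin m → ℕ) (hmv : ∀ j, 0 < mv j) (b : Fin m → ℝ)
    (K₁ K₂ : Set ℝ)
    (hK₁ne : K₁.Nonempty) (hK₁c : IsCompact K₁)
    (hK₁ : K₁ = ⋃ i : Fin n, (fun x => x / β ^ nv i + a i) '' K₁)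
    (hK₂ne : K₂.Nonempty) (hK₂c : IsCompact K₂)
    (hK₂ : K₂ = ⋃ j : Fin m, (fun x => x / β ^ mv j + b j) '' K₂)
    (P : Fin n → List ℝ) (Q : Fin m → List ℝ)
    (hP : P = fun i => digitBlock β (nv i) (a i))
    (hQ : Q = fun j => digitBlock β (mv j) (b j))
    (hDinf : {w : List ℝ | IsPrimMatching P Q w}.Infinite)
    (w : ℕ → List ℝ) (hwinj : Function.Injective w)
    (hwrange : Set.range w = {w : List ℝ | IsPrimMatching P Q w})
    (hwmono : Monotone fun N => (w N).length)
    (F : ℕ → Set ℝ) (hFne : ∀ N, (F N).Nonempty) (hFc : ∀ N, IsCompact (F N))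
    (hF : ∀ N, F N = ⋃ i : Fin (N + 1), phiBlock β (w i) '' F N) :
    Monotone F ∧ closure (⋃ N, F N) = K₁ + K₂ :=
  statement14_general β hβ n m hn hm nv hnv a mv hmv b K₁ K₂ hK₁ne hK₁c hK₁ hK₂ne hK₂c hK₂ P Q hP hQ
    w hwrange F hFne hFc hF
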